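/- The vector field F vanishes at (π, π, 0), F is differentiable there, and its Jacobian matrix at (π, π, 0) is the diagonal matrix diag(λ₁, λ₂, λ₃) with λ₁ = −2K cos α₄ + 2cos α₂ + 4r cos 2α₂, λ₂ = 2K cos α₄ + 2cos α₂ + 4r cos 2α₂, and λ₃ = −2cos α₂ + 4r cos 2α₂. -/

import Mathlib

open Real

/-- Odd part of the pairwise coupling function: `ḡ₂(ϑ) = −cos α₂ sin ϑ + r cos 2α₂ sin 2ϑ`. -/
noncomputable def gbar2 (α₂ r : ℝ) (ϑ : ℝ) : ℝ :=
  -cos α₂ * sin ϑ + r * cos (2 * α₂) * sin (2 * ϑ)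

/-- Odd part of the interpopulation coupling function: `ḡ₄(ϑ) = −cos α₄ sin ϑ`. -/
noncomputable def gbar4 (α₄ : ℝ) (ϑ : ℝ) : ℝ := -cos α₄ * sin ϑ

/-- The reduced phase-difference vector field for M = 3 populations of N = 2 oscillators
(indices taken cyclically in `Fin 3`). -/
noncomputable def F (α₂ α₄ r K : ℝ) (ψ : Fin 3 → ℝ) : Fin 3 → ℝ := fun σ =>
  2 * gbar2 α₂ r (ψ σ)
    - K / 2 * (gbar4 α₄ (ψ (σ - 1) + ψ σ) + gbar4 α₄ (ψ σ - ψ (σ - 1)))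
    + K / 2 * (gbar4 α₄ (ψ (σ + 1) + ψ σ) + gbar4 α₄ (ψ σ - ψ (σ + 1)))

noncomputable abbrev P (i : Fin 3) : (Fin 3 → ℝ) →L[ℝ] ℝ := ContinuousLinearMap.proj i

lemma hasF_comp (α₂ α₄ r K : ℝ) (σ : Fin 3) (x : Fin 3 → ℝ) :
    HasFDerivAt (fun ψ : Fin 3 → ℝ => F α₂ α₄ r K ψ σ)
      ((2:ℝ) • (((-cos α₂) • (cos (x σ) • P σ)) +
          ((r * cos (2*α₂)) • (cos (2 * x σ) • ((2:ℝ) • P σ))))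
        - (K/2) • (((-cos α₄) • (cos (x (σ-1) + x σ) • (P (σ-1) + P σ))) +
            ((-cos α₄) • (cos (x σ - x (σ-1)) • (P σ - P (σ-1)))))
        + (K/2) • (((-cos α₄) • (cos (x (σ+1) + x σ) • (P (σ+1) + P σ))) +
            ((-cos α₄) • (cos (x σ - x (σ+1)) • (P σ - P (σ+1)))))) x := by
  have hp : ∀ i : Fin 3, HasFDerivAt (fun ψ : Fin 3 → ℝ => ψ i) (P i) x := fun i =>
    hasFDerivAt_apply i x
  have hs : ∀ (D : (Fin 3 → ℝ) →L[ℝ] ℝ) (f : (Fin 3 → ℝ) → ℝ), HasFDerivAt f D x →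
      HasFDerivAt (fun ψ => sin (f ψ)) (cos (f x) • D) x := fun D f hf =>
    (Real.hasDerivAt_sin (f x)).comp_hasFDerivAt x hf
  have h1 : HasFDerivAt (fun ψ : Fin 3 → ℝ => 2 * gbar2 α₂ r (ψ σ))
      ((2:ℝ) • (((-cos α₂) • (cos (x σ) • P σ)) +
          ((r * cos (2*α₂)) • (cos (2 * x σ) • ((2:ℝ) • P σ))))) x := by
    exact (((hs _ _ (hp σ)).const_mul (-cos α₂)).add
      ((hs _ _ ((hp σ).const_mul 2)).const_mul (r * cos (2*α₂)))).const_mul 2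
  have h2 : ∀ τ : Fin 3, HasFDerivAt
      (fun ψ : Fin 3 → ℝ => K/2 * (gbar4 α₄ (ψ τ + ψ σ) + gbar4 α₄ (ψ σ - ψ τ)))
      ((K/2) • (((-cos α₄) • (cos (x τ + x σ) • (P τ + P σ))) +
          ((-cos α₄) • (cos (x σ - x τ) • (P σ - P τ))))) x := fun τ =>
    (((hs _ _ ((hp τ).add (hp σ))).const_mul (-cos α₄)).add
      ((hs _ _ ((hp σ).sub (hp τ))).const_mul (-cos α₄))).const_mul (K/2)
  exact (h1.sub (h2 (σ-1))).add (h2 (σ+1))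

/-- `(π, π, 0)` (the relative equilibrium D D S) is an equilibrium of `F`, `F` is
differentiable there, and the Jacobian is `diag(λ₁, λ₂, λ₃)` with
`λ₁ = −2K cos α₄ + 2cos α₂ + 4r cos 2α₂`, `λ₂ = 2K cos α₄ + 2cos α₂ + 4r cos 2α₂`,
`λ₃ = −2cos α₂ + 4r cos 2α₂`. -/
theorem equilibrium_DDS_jacobian (α₂ α₄ r K : ℝ) (hK : 0 < K) :
    F α₂ α₄ r K ![π, π, 0] = 0 ∧
    HasFDerivAt (F α₂ α₄ r K)
      (LinearMap.toContinuousLinearMap (Matrix.toLin'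
        (Matrix.diagonal
          ![-2 * K * cos α₄ + 2 * cos α₂ + 4 * r * cos (2 * α₂),
            2 * K * cos α₄ + 2 * cos α₂ + 4 * r * cos (2 * α₂),
            -2 * cos α₂ + 4 * r * cos (2 * α₂)])))
      ![π, π, 0] := by
  constructor
  · funext σ
    fin_cases σ <;>
      simp [F, gbar2, gbar4, Real.sin_add, Real.sin_sub, Real.sin_pi, Real.sin_two_pi]
  · apply hasFDerivAt_pi''
    intro σ
    fin_cases σ
    · have h := hasF_comp α₂ α₄ r K 0 ![π, π, 0]
      rw [show (0:Fin 3) - 1 = 2 from rfl, show (0:Fin 3) + 1 = 1 from rfl] at h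
      refine HasFDerivAt.congr_fderiv h ?_
      ext v
      simp [Matrix.toLin'_apply, Matrix.mulVec_diagonal, Real.cos_add, Real.cos_sub,
        Real.cos_two_pi]
      ring
    · have h := hasF_comp α₂ α₄ r K 1 ![π, π, 0]
      rw [show (1:Fin 3) - 1 = 0 from rfl, show (1:Fin 3) + 1 = 2 from rfl] at h
      refine HasFDerivAt.congr_fderiv h ?_
      ext v
      simp [Matrix.toLin'_apply, Matrix.mulVec_diagonal, Real.cos_add, Real.cos_sub,
        Real.cos_two_pi]
      ring
    · have h := hasF_comp α₂ α₄ r K 2 ![π, π, 0]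
      rw [show (2:Fin 3) - 1 = 1 from rfl, show (2:Fin 3) + 1 = 0 from rfl] at h
      refine HasFDerivAt.congr_fderiv h ?_
      ext v
      simp [Matrix.toLin'_apply, Matrix.mulVec_diagonal, Real.cos_add, Real.cos_sub,
        Real.cos_two_pi]
      ring
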